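/- Let 2 ≤ m ≤ n and let W be a normalized m×n decomposable entanglement witness. Then 0 < N(W) ≤ (m − 1)/2, where N(W) is the negativity of W. -/

import Mathlib

open Matrix ComplexOrder

noncomputable section

/-- The product vector `a ⊗ b`. -/
def prodVec {m n : ℕ} (a : Fin m → ℂ) (b : Fin n → ℂ) : Fin m × Fin n → ℂ :=
  fun p => a p.1 * b p.2

/-- `W` is block-positive: Hermitian, and the quadratic form on every product
vector is real and nonnegative. -/
def BlockPositive {m n : ℕ} (W : Matrix (Fin m × Fin n) (Fin m × Fin n) ℂ) : Prop :=
  W.IsHermitian ∧ ∀ (a : Fin m → ℂ) (b : Fin n → ℂ),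
    0 ≤ (star (prodVec a b) ⬝ᵥ W.mulVec (prodVec a b)).re ∧
    (star (prodVec a b) ⬝ᵥ W.mulVec (prodVec a b)).im = 0

/-- Partial transpose: `M^Γ ((i,k),(j,l)) = M ((j,k),(i,l))`. -/
def ptrans {m n : ℕ} (M : Matrix (Fin m × Fin n) (Fin m × Fin n) ℂ) :
    Matrix (Fin m × Fin n) (Fin m × Fin n) ℂ :=
  fun p q => M (q.1, p.2) (p.1, q.2)

/-- `W` is decomposable: `W = P + Q^Γ` with `P, Q` positive semidefinite. -/
def Decomposable {m n : ℕ} (W : Matrix (Fin m × Fin n) (Fin m × Fin n) ℂ) : Prop :=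
  ∃ P Q : Matrix (Fin m × Fin n) (Fin m × Fin n) ℂ,
    P.PosSemidef ∧ Q.PosSemidef ∧ W = P + ptrans Q

/-- Negativity: absolute value of the sum of the negative eigenvalues. -/
noncomputable def negativity {N : Type*} [Fintype N] [DecidableEq N]
    {W : Matrix N N ℂ} (hW : W.IsHermitian) : ℝ :=
  ∑ i, max (-(hW.eigenvalues i)) 0

/-- The eigenvalues of a Hermitian matrix, listed in non-increasing order with
multiplicity. -/
noncomputable def sortedEigs {N : Type*} [Fintype N] [DecidableEq N]
    {W : Matrix N N ℂ} (hW : W.IsHermitian) : List ℝ :=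
  (Finset.univ.val.map hW.eigenvalues).sort (· ≥ ·)

variable {m n : ℕ}

lemma ptrans_trace (M : Matrix (Fin m × Fin n) (Fin m × Fin n) ℂ) :
    (ptrans M).trace = M.trace := by
  simp [Matrix.trace, Matrix.diag, ptrans]

lemma ptrans_isHermitian {M : Matrix (Fin m × Fin n) (Fin m × Fin n) ℂ}
    (hM : M.IsHermitian) : (ptrans M).IsHermitian := by
  ext p q
  simp only [conjTranspose_apply, ptrans]
  rw [← hM.apply]
  simp [conjTranspose_apply]

lemma trace_mul_ptrans (A B : Matrix (Fin m × Fin n) (Fin m × Fin n) ℂ) :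
    (A * ptrans B).trace = (ptrans A * B).trace := by
  have h : Function.Involutive
      (fun x : (Fin m × Fin n) × (Fin m × Fin n) => ((x.2.1, x.1.2), (x.1.1, x.2.2))) :=
    fun x => rfl
  simp only [Matrix.trace, Matrix.diag, Matrix.mul_apply, ptrans]
  rw [← Fintype.sum_prod_type']
  rw [← Fintype.sum_prod_type']
  exact Fintype.sum_equiv h.toPerm _ _ (fun x => by simp [Function.Involutive.toPerm])

lemma star_quad {N : Type*} [Fintype N] (A : Matrix N N ℂ) (x y : N → ℂ) :
    star (star x ⬝ᵥ A *ᵥ y) = star y ⬝ᵥ Aᴴ *ᵥ x := by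
  simp only [dotProduct, mulVec, star_sum, star_mul', star_apply, Pi.star_apply, star_star,
    Finset.mul_sum, map_sum, conjTranspose_apply]
  rw [Finset.sum_comm]
  apply Finset.sum_congr rfl; intro i _
  apply Finset.sum_congr rfl; intro j _
  ring

lemma herm_quad_conj {N : Type*} [Fintype N] {A : Matrix N N ℂ} (hA : A.IsHermitian)
    (x y : N → ℂ) : star y ⬝ᵥ A *ᵥ x = star (star x ⬝ᵥ A *ᵥ y) := by
  rw [star_quad, hA.eq]

lemma herm_quad_real {N : Type*} [Fintype N] {A : Matrix N N ℂ} (hA : A.IsHermitian)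
    (x : N → ℂ) : (star x ⬝ᵥ A *ᵥ x).im = 0 := by
  have := (herm_quad_conj hA x x).symm
  exact Complex.conj_eq_iff_im.mp this

lemma psd_trace_nonneg {N : Type*} [Fintype N] [DecidableEq N] {A : Matrix N N ℂ}
    (hA : A.PosSemidef) : 0 ≤ A.trace := by
  have : ∀ i, 0 ≤ A i i := fun i => by
    simpa [mulVec, dotProduct, Pi.single_apply, apply_ite] using hA.dotProduct_mulVec_nonneg (Pi.single i 1)
  exact Finset.sum_nonneg fun i _ => this i

lemma psd_trace_mul_nonneg {N : Type*} [Fintype N] [DecidableEq N]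
    {A B : Matrix N N ℂ} (hA : A.PosSemidef) (hB : B.PosSemidef) :
    0 ≤ (A * B).trace := by
  obtain ⟨C, rfl⟩ : ∃ C : Matrix N N ℂ, A = Cᴴ * C := by
    open scoped MatrixOrder in
    have h0 : (0 : Matrix N N ℂ) ≤ A := Matrix.nonneg_iff_posSemidef.mpr hA
    refine ⟨CFC.sqrt A, ?_⟩
    rw [← Matrix.star_eq_conjTranspose, (CFC.sqrt_nonneg A).isSelfAdjoint.star_eq,
      CFC.sqrt_mul_sqrt_self A h0]
  rw [Matrix.mul_assoc, Matrix.trace_mul_comm]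
  exact psd_trace_nonneg (hB.mul_mul_conjTranspose_same C)

lemma ptrans_quad_lower {X : Matrix (Fin m × Fin n) (Fin m × Fin n) ℂ}
    (hX : X.PosSemidef) (hX1 : (1 - X).PosSemidef) (v : Fin m × Fin n → ℂ) :
    -(((m:ℝ) - 1) / 2) * (star v ⬝ᵥ v).re ≤ (star v ⬝ᵥ (ptrans X) *ᵥ v).re := by
  classical
  set F : Fin m → Fin m → (Fin m × Fin n → ℂ) :=
    fun i j p => if p.1 = j then v (i, p.2) else 0 with hF
  set T : Fin m → Fin m → ℂ := fun i j => star (F i j) ⬝ᵥ X *ᵥ (F j i) with hT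
  set s : Fin m → ℝ := fun i => ∑ k, Complex.normSq (v (i, k)) with hs
  have rhs : ∀ i j, T i j = ∑ k, ∑ l, star (v (i,k)) * X (j,k) (i,l) * v (j,l) := by
    intro i j
    have hinner : ∀ p, (X *ᵥ F j i) p = ∑ l, X p (i, l) * v (j, l) := by
      intro p
      simp only [mulVec, dotProduct, hF, Fintype.sum_prod_type, mul_ite, mul_zero]
      rw [Finset.sum_comm]
      simp [Finset.sum_ite_eq']
    calc T i j = ∑ p, star (F i j p) * (∑ l, X p (i, l) * v (j, l)) := by
          simp only [hT, dotProduct, Pi.star_apply]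
          exact Finset.sum_congr rfl fun p _ => by rw [hinner]
      _ = ∑ k, ∑ l, star (v (i,k)) * X (j,k) (i,l) * v (j,l) := by
          simp only [hF, Fintype.sum_prod_type, apply_ite (star : ℂ → ℂ), star_zero,
            ite_mul, zero_mul]
          rw [Finset.sum_comm]
          simp only [Finset.sum_ite_eq', Finset.mem_univ, if_true, Finset.mul_sum]
          apply Finset.sum_congr rfl; intro k _
          apply Finset.sum_congr rfl; intro l _
          ring
  have hdec : star v ⬝ᵥ (ptrans X) *ᵥ v = ∑ i, ∑ j, T i j := by
    simp only [rhs, dotProduct, mulVec, ptrans, Fintype.sum_prod_type, Pi.star_apply,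
      Finset.mul_sum]
    apply Finset.sum_congr rfl; intro i _
    rw [Finset.sum_comm]
    apply Finset.sum_congr rfl; intro j _
    apply Finset.sum_congr rfl; intro k _
    apply Finset.sum_congr rfl; intro l _
    ring
  have hFF : ∀ i j, star (F i j) ⬝ᵥ (F i j) = (s i : ℂ) := by
    intro i j
    simp only [hF, hs, dotProduct, Fintype.sum_prod_type, Pi.star_apply,
      apply_ite (star : ℂ → ℂ), star_zero, ite_mul, zero_mul, mul_ite, mul_zero]
    rw [Finset.sum_comm]
    simp only [Finset.sum_ite_eq', Finset.mem_univ, if_true, Complex.ofReal_sum]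
    apply Finset.sum_congr rfl; intro k _
    rw [Complex.star_def, Complex.normSq_eq_conj_mul_self]
  have hOrth : ∀ i j, i ≠ j → star (F i j) ⬝ᵥ (F j i) = 0 := by
    intro i j hij
    apply Finset.sum_eq_zero
    intro p _
    simp only [hF, Pi.star_apply]
    by_cases h2 : p.1 = i
    · have h1 : ¬ p.1 = j := fun h => hij (by rw [← h2, h])
      simp [h1]
    · simp [h2]
  have hsnn : ∀ i, 0 ≤ s i := fun i => Finset.sum_nonneg fun k _ => Complex.normSq_nonneg _
  have hbound : ∀ i j, (if i = j then (0:ℝ) else -((s i + s j)/4)) ≤ (T i j).re := by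
    intro i j
    by_cases hij : i = j
    · subst hij
      simp only [if_pos rfl]
      have := (Complex.le_def.mp (hX.dotProduct_mulVec_nonneg (F i i))).1
      simpa [hT] using this
    · simp only [if_neg hij]
      set x := F i j
      set y := F j i
      have hxy0 : star x ⬝ᵥ y = 0 := hOrth i j hij
      have hyx0 : star y ⬝ᵥ x = 0 := hOrth j i (Ne.symm hij)
      have hxx : star x ⬝ᵥ x = (s i : ℂ) := hFF i j
      have hyy : star y ⬝ᵥ y = (s j : ℂ) := hFF j i
      have e1 : star (x + y) ⬝ᵥ X *ᵥ (x + y)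
          = star x ⬝ᵥ X *ᵥ x + star y ⬝ᵥ X *ᵥ y
            + (star x ⬝ᵥ X *ᵥ y + star (star x ⬝ᵥ X *ᵥ y)) := by
        rw [star_add, add_dotProduct, mulVec_add, dotProduct_add, dotProduct_add,
          ← herm_quad_conj hX.1]
        ring
      have e2 : star (x - y) ⬝ᵥ (1 - X) *ᵥ (x - y)
          = ((s i : ℂ) + (s j : ℂ))
            - (star x ⬝ᵥ X *ᵥ x + star y ⬝ᵥ X *ᵥ y
               - (star x ⬝ᵥ X *ᵥ y + star (star x ⬝ᵥ X *ᵥ y))) := by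
        simp only [sub_mulVec, one_mulVec, star_sub, sub_dotProduct, dotProduct_sub,
          mulVec_sub]
        rw [hxy0, hyx0, hxx, hyy, herm_quad_conj hX.1 x y]
        ring
      have h1 : (0:ℝ) ≤ (star (x + y) ⬝ᵥ X *ᵥ (x + y)).re := by
        have := (Complex.le_def.mp (hX.dotProduct_mulVec_nonneg (x + y))).1
        simpa using this
      rw [e1] at h1
      have h2 : (0:ℝ) ≤ (star (x - y) ⬝ᵥ (1 - X) *ᵥ (x - y)).re := by
        have := (Complex.le_def.mp (hX1.dotProduct_mulVec_nonneg (x - y))).1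
        simpa using this
      rw [e2] at h2
      simp only [Complex.add_re, Complex.sub_re, Complex.ofReal_re, Complex.star_def,
        Complex.conj_re] at h1 h2
      have hTT : (T i j).re = (star x ⬝ᵥ X *ᵥ y).re := rfl
      rw [hTT]
      linarith
  have hsum : ∑ i, ∑ j, (if i = j then (0:ℝ) else -((s i + s j)/4))
      = -(((m:ℝ) - 1) / 2) * ∑ i, s i := by
    have hsplit : ∀ i j : Fin m, (if i = j then (0:ℝ) else -((s i + s j)/4))
        = -((s i + s j)/4) + (if i = j then (s i + s j)/4 else 0) := by
      intro i j; split <;> ring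
    have hA : ∀ i : Fin m, (∑ j : Fin m, (if i = j then (0:ℝ) else -((s i + s j)/4)))
        = (-((m:ℝ) * s i) - ∑ j, s j)/4 + (s i)/2 := by
      intro i
      have hthis : ∀ j : Fin m, (if i = j then (0:ℝ) else -((s i + s j)/4))
          = (-(s i) - s j)/4 + (if i = j then (s i + s j)/4 else 0) := by
        intro j; split <;> ring
      rw [Finset.sum_congr rfl fun j _ => hthis j, Finset.sum_add_distrib, ← Finset.sum_div,
        Finset.sum_sub_distrib, Finset.sum_const, Finset.card_univ, Fintype.card_fin,
        Finset.sum_ite_eq, if_pos (Finset.mem_univ i), nsmul_eq_mul]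
      ring_nf
    rw [Finset.sum_congr rfl fun i _ => hA i, Finset.sum_add_distrib, ← Finset.sum_div,
      Finset.sum_sub_distrib, ← Finset.sum_div, Finset.sum_const, Finset.card_univ,
      Fintype.card_fin, nsmul_eq_mul, Finset.sum_neg_distrib, ← Finset.mul_sum]
    ring
  have hvre : (star v ⬝ᵥ v).re = ∑ i, s i := by
    simp only [dotProduct, Pi.star_apply, Complex.re_sum, hs, Fintype.sum_prod_type]
    apply Finset.sum_congr rfl; intro i _
    apply Finset.sum_congr rfl; intro k _
    rw [Complex.star_def, ← Complex.normSq_eq_conj_mul_self, Complex.ofReal_re]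
  calc -(((m:ℝ) - 1) / 2) * (star v ⬝ᵥ v).re
      = ∑ i, ∑ j, (if i = j then (0:ℝ) else -((s i + s j)/4)) := by rw [hvre, hsum]
    _ ≤ ∑ i, ∑ j, (T i j).re :=
        Finset.sum_le_sum fun i _ => Finset.sum_le_sum fun j _ => hbound i j
    _ = (star v ⬝ᵥ (ptrans X) *ᵥ v).re := by
        rw [hdec, Complex.re_sum]
        exact Finset.sum_congr rfl fun i _ => by rw [Complex.re_sum]

lemma key_psd {X : Matrix (Fin m × Fin n) (Fin m × Fin n) ℂ}
    (hX : X.PosSemidef) (hX1 : (1 - X).PosSemidef) :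
    (ptrans X + ((((m:ℝ) - 1) / 2 : ℝ) : ℂ) •
      (1 : Matrix (Fin m × Fin n) (Fin m × Fin n) ℂ)).PosSemidef := by
  have hH : (ptrans X + ((((m:ℝ) - 1) / 2 : ℝ) : ℂ) •
      (1 : Matrix (Fin m × Fin n) (Fin m × Fin n) ℂ)).IsHermitian := by
    apply IsHermitian.add (ptrans_isHermitian hX.1)
    unfold Matrix.IsHermitian
    rw [Matrix.conjTranspose_smul, Matrix.conjTranspose_one]
    congr 1
    simp [Complex.star_def, Complex.conj_ofReal]
  refine PosSemidef.of_dotProduct_mulVec_nonneg hH fun x => ?_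
  rw [Complex.le_def]
  have hxx := dotProduct_star_self_nonneg x
  have hxxre : 0 ≤ (star x ⬝ᵥ x).re := by simpa using (Complex.le_def.mp hxx).1
  have hxxim : (star x ⬝ᵥ x).im = 0 := by simpa using (Complex.le_def.mp hxx).2.symm
  have hexp : star x ⬝ᵥ (ptrans X + ((((m:ℝ) - 1) / 2 : ℝ) : ℂ) • 1) *ᵥ x
      = star x ⬝ᵥ (ptrans X) *ᵥ x + ((((m:ℝ) - 1) / 2 : ℝ) : ℂ) * (star x ⬝ᵥ x) := by
    rw [Matrix.add_mulVec, dotProduct_add, Matrix.smul_mulVec, Matrix.one_mulVec,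
      dotProduct_smul, smul_eq_mul]
  constructor
  · rw [hexp]
    simp only [Complex.add_re, Complex.zero_re, Complex.re_ofReal_mul]
    have := ptrans_quad_lower hX hX1 x
    linarith
  · rw [Complex.zero_im, herm_quad_real hH x]

/-- For a normalized `m × n` decomposable entanglement witness with `m ≤ n`,
`0 < N(W) ≤ (m - 1)/2`. -/
theorem stmt_12 {m n : ℕ} (hm : 2 ≤ m) (hmn : m ≤ n)
    (W : Matrix (Fin m × Fin n) (Fin m × Fin n) ℂ)
    (hBP : BlockPositive W) (hNP : ¬ W.PosSemidef) (htr : W.trace = 1)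
    (hD : Decomposable W) :
    0 < negativity hBP.1 ∧ negativity hBP.1 ≤ ((m : ℝ) - 1) / 2 := by
  classical
  obtain ⟨P, Q, hP, hQ, hduo⟩ := hD
  have h1 : 0 < negativity hBP.1 := by
    have hex : ∃ i, hBP.1.eigenvalues i < 0 := by
      by_contra h
      push_neg at h
      exact hNP (hBP.1.posSemidef_iff_eigenvalues_nonneg.mpr (fun i => h i))
    obtain ⟨i, hi⟩ := hex
    have hpos : 0 < max (-(hBP.1.eigenvalues i)) 0 := by
      rw [lt_max_iff]; left; linarith
    exact Finset.sum_pos' (fun j _ => le_max_right _ _) ⟨i, Finset.mem_univ i, hpos⟩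
  refine ⟨h1, ?_⟩
  set U : Matrix (Fin m × Fin n) (Fin m × Fin n) ℂ :=
    (hBP.1.eigenvectorUnitary : Matrix (Fin m × Fin n) (Fin m × Fin n) ℂ) with hUdef
  have hU1 : star U * U = 1 := by
    have := (hBP.1.eigenvectorUnitary).2
    exact (Unitary.mem_iff.mp this).1
  have hU2 : U * star U = 1 := by
    have := (hBP.1.eigenvectorUnitary).2
    exact (Unitary.mem_iff.mp this).2
  set D : Matrix (Fin m × Fin n) (Fin m × Fin n) ℂ :=
    diagonal (RCLike.ofReal ∘ hBP.1.eigenvalues) with hDdef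
  have hsp : W = U * D * star U := hBP.1.spectral_theorem
  set e : (Fin m × Fin n) → ℂ := fun i => if hBP.1.eigenvalues i < 0 then 1 else 0 with hedef
  set X : Matrix (Fin m × Fin n) (Fin m × Fin n) ℂ := U * diagonal e * star U with hXdef
  have hXpsd : X.PosSemidef := by
    have hd : (diagonal e).PosSemidef := posSemidef_diagonal_iff.mpr
      (fun i => by by_cases h : hBP.1.eigenvalues i < 0 <;> simp [hedef, h])
    have := hd.mul_mul_conjTranspose_same U
    rwa [← Matrix.star_eq_conjTranspose] at this
  have hX1psd : (1 - X).PosSemidef := by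
    have h1X : (1 : Matrix (Fin m × Fin n) (Fin m × Fin n) ℂ) - X
        = U * (1 - diagonal e) * star U := by
      rw [Matrix.mul_sub, Matrix.sub_mul, Matrix.mul_one, hU2]
    rw [h1X, show (1 : Matrix (Fin m × Fin n) (Fin m × Fin n) ℂ) - diagonal e
        = diagonal (fun i => 1 - e i) by rw [← Matrix.diagonal_one, Matrix.diagonal_sub]]
    have hd : (diagonal (fun i => 1 - e i)).PosSemidef := posSemidef_diagonal_iff.mpr
      (fun i => by by_cases h : hBP.1.eigenvalues i < 0 <;> simp [hedef, h])
    have := hd.mul_mul_conjTranspose_same U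
    rwa [← Matrix.star_eq_conjTranspose] at this
  have htrXW : (X * W).trace = ∑ i, e i * ((hBP.1.eigenvalues i : ℝ) : ℂ) := by
    have key : X * W = U * (diagonal e * D) * star U := by
      rw [hsp, hXdef]
      simp only [Matrix.mul_assoc]
      rw [← Matrix.mul_assoc (star U) U (D * star U), hU1, Matrix.one_mul]
    rw [key, Matrix.trace_mul_cycle, hU1, Matrix.one_mul]
    simp [hDdef, Matrix.diagonal_mul_diagonal, Matrix.trace_diagonal]
  have hre : negativity hBP.1 = -((X * W).trace.re) := by
    rw [htrXW, Complex.re_sum, negativity, ← Finset.sum_neg_distrib]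
    apply Finset.sum_congr rfl
    intro i _
    by_cases h : hBP.1.eigenvalues i < 0
    · rw [max_eq_left (by linarith)]
      simp [hedef, h]
    · rw [max_eq_right (by simp at h; linarith)]
      simp [hedef, h]
  have hXW : (X * W).trace = (X * P).trace + (ptrans X * Q).trace := by
    rw [hduo, Matrix.mul_add, Matrix.trace_add, trace_mul_ptrans]
  have hXP := psd_trace_mul_nonneg hXpsd hP
  have hXPre : 0 ≤ (X * P).trace.re := by simpa using (Complex.le_def.mp hXP).1
  have hKQ := psd_trace_mul_nonneg (key_psd hXpsd hX1psd) hQ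
  have hKQexp : ((ptrans X + ((((m:ℝ) - 1) / 2 : ℝ) : ℂ) • 1) * Q).trace
      = (ptrans X * Q).trace + ((((m:ℝ) - 1) / 2 : ℝ) : ℂ) * Q.trace := by
    rw [Matrix.add_mul, Matrix.trace_add, Matrix.smul_mul, Matrix.one_mul, Matrix.trace_smul,
      smul_eq_mul]
  have hKQre : 0 ≤ (ptrans X * Q).trace.re + (((m:ℝ) - 1) / 2) * Q.trace.re := by
    have := (Complex.le_def.mp hKQ).1
    rw [hKQexp] at this
    simpa [Complex.add_re, Complex.re_ofReal_mul] using this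
  have hPtr : 0 ≤ P.trace.re := by simpa using (Complex.le_def.mp (psd_trace_nonneg hP)).1
  have hQtr : 0 ≤ Q.trace.re := by simpa using (Complex.le_def.mp (psd_trace_nonneg hQ)).1
  have hsumtr : P.trace.re + Q.trace.re = 1 := by
    have : W.trace = P.trace + Q.trace := by
      rw [hduo, Matrix.trace_add, ptrans_trace]
    rw [htr] at this
    have := congrArg Complex.re this.symm
    simpa [Complex.add_re] using this
  have hc0 : (0:ℝ) ≤ ((m:ℝ) - 1) / 2 := by
    have : (2:ℝ) ≤ (m:ℝ) := by exact_mod_cast hm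
    linarith
  have hQle1 : Q.trace.re ≤ 1 := by linarith
  have hXWre : (X * W).trace.re = (X * P).trace.re + (ptrans X * Q).trace.re := by
    rw [hXW, Complex.add_re]
  rw [hre, hXWre]
  nlinarith [mul_le_mul_of_nonneg_left hQle1 hc0]

end
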